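/- Let (G^{α})_{α≥1} be a decreasing chain of inverse systems of groups over a poset I (i.e. for each i ∈ I a descending chain of subgroups G_i^1 ⊇ G_i^2 ⊇ ⋯ compatible with transition maps) such that: (a) for each α ≥ 1, lim_{i∈I}(G_i^α/G_i^{α+1}) is trivial in the sense that lim¹_{i∈I}(G_i^α/G_i^{α+1}) = 0 and the maps lim¹ G_i^{α+1} → lim¹ G_i^α are surjective; (b) for each i ∈ I there exists α_i with G_i^{α'} = 1 for α' > α_i. Then lim¹_{i∈I} G_i^α is the trivial pointed set for every α ≥ 1. -/

import Mathlib

/-!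
Lifting a level-`α` cocycle step by step along the surjections `lim¹ G^{α+n+1} → lim¹ G^{α+n}`
changes it, at stage `n`, by a coboundary of a family `b n` with values in `G^{α+n}`. The
infinite ordered product `b 0 · b 1 · b 2 ⋯` makes sense, because at each index `i` its factors
are eventually `1` by eventual triviality, and the cocycle is the coboundary of this product:
at a fixed pair `j ≤ i` the lifted cocycle itself is eventually `1`.
-/

section
variable {I : Type*} [PartialOrder I] (G : I → Type*) [∀ i, Group (G i)]
  (π : ∀ ⦃j i : I⦄, j ≤ i → (G i →* G j))

/-- A cocycle for the inverse system at level `α`: a family `(z_j^i ∈ K_j^α)_{j ≤ i}`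
satisfying the cocycle condition `z_k^i = π_k^j(z_j^i) · z_k^j`. -/
def IsCocycleAt (K : ∀ i, ℕ → Subgroup (G i)) (α : ℕ)
    (z : ∀ ⦃j i : I⦄, j ≤ i → G j) : Prop :=
  (∀ ⦃j i : I⦄ (h : j ≤ i), z h ∈ K j α) ∧
  (∀ ⦃k j i : I⦄ (hkj : k ≤ j) (hji : j ≤ i),
    z (hkj.trans hji) = π hkj (z hji) * z hkj)

section
variable {ι : Type*} {M : ι → Type*} [∀ i, Monoid (M i)]

def partialProd (b : ℕ → ∀ i, M i) (n : ℕ) (i : ι) : M i :=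
  ((List.range n).map fun k => b k i).prod

@[simp]
theorem partialProd_zero (b : ℕ → ∀ i, M i) (i : ι) : partialProd b 0 i = 1 := rfl

theorem partialProd_succ (b : ℕ → ∀ i, M i) (n : ℕ) (i : ι) :
    partialProd b (n + 1) i = partialProd b n i * b n i :=
  List.prod_range_succ _ n

theorem partialProd_eq_of_le {b : ℕ → ∀ i, M i} {i : ι} {N : ℕ}
    (hb : ∀ k, N ≤ k → b k i = 1) {n : ℕ} (hn : N ≤ n) :
    partialProd b n i = partialProd b N i := by
  induction n, hn using Nat.le_induction with
  | base => rfl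
  | succ n hn ih => rw [partialProd_succ, hb n hn, mul_one, ih]

theorem partialProd_mem {i : ι} {S : ℕ → Submonoid (M i)} (hS : Antitone S) {α : ℕ}
    {b : ℕ → ∀ i, M i} (hb : ∀ k, b k i ∈ S (α + k)) (n : ℕ) :
    partialProd b n i ∈ S α := by
  induction n with
  | zero => exact (S α).one_mem
  | succ n ih =>
    rw [partialProd_succ]
    exact (S α).mul_mem ih (hS (Nat.le_add_right α n) (hb n))

end

section
variable {G π}

theorem eq_partialProd_mul_mul_inv (w : ℕ → ∀ ⦃j i : I⦄, j ≤ i → G j)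
    (b : ℕ → ∀ i, G i)
    (hw : ∀ n ⦃j i : I⦄ (h : j ≤ i), w n h = π h (b n i) * w (n + 1) h * (b n j)⁻¹)
    (n : ℕ) ⦃j i : I⦄ (h : j ≤ i) :
    w 0 h = π h (partialProd b n i) * w n h * (partialProd b n j)⁻¹ := by
  induction n with
  | zero => simp
  | succ n ih =>
    rw [ih, hw n h, partialProd_succ, partialProd_succ, map_mul, mul_inv_rev]
    group

theorem exists_seq_cocycle_of_lift (K : ∀ i, ℕ → Subgroup (G i))
    (hlift : ∀ α : ℕ, 1 ≤ α → ∀ z : ∀ ⦃j i : I⦄, j ≤ i → G j,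
      IsCocycleAt G π K α z →
      ∃ (z' : ∀ ⦃j i : I⦄, j ≤ i → G j) (b : ∀ i, G i),
        IsCocycleAt G π K (α + 1) z' ∧ (∀ i, b i ∈ K i α) ∧
        ∀ ⦃j i : I⦄ (h : j ≤ i), z h = π h (b i) * z' h * (b j)⁻¹)
    {α : ℕ} (hα : 1 ≤ α) {z : ∀ ⦃j i : I⦄, j ≤ i → G j} (hz : IsCocycleAt G π K α z) :
    ∃ (w : ℕ → ∀ ⦃j i : I⦄, j ≤ i → G j) (b : ℕ → ∀ i, G i),
      w 0 = z ∧ (∀ n, IsCocycleAt G π K (α + n) (w n)) ∧ (∀ n i, b n i ∈ K i (α + n)) ∧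
      ∀ n ⦃j i : I⦄ (h : j ≤ i), w n h = π h (b n i) * w (n + 1) h * (b n j)⁻¹ := by
  -- Made total in `w`, so that `choose` yields plain functions to iterate.
  have hstep : ∀ (n : ℕ) (w : ∀ ⦃j i : I⦄, j ≤ i → G j),
      ∃ (w' : ∀ ⦃j i : I⦄, j ≤ i → G j) (b : ∀ i, G i),
        IsCocycleAt G π K (α + n) w → IsCocycleAt G π K (α + n + 1) w' ∧
          (∀ i, b i ∈ K i (α + n)) ∧
          ∀ ⦃j i : I⦄ (h : j ≤ i), w h = π h (b i) * w' h * (b j)⁻¹ := by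
    intro n w
    by_cases hw : IsCocycleAt G π K (α + n) w
    · obtain ⟨w', b, hb⟩ := hlift (α + n) (by omega) w hw
      exact ⟨w', b, fun _ => hb⟩
    · exact ⟨w, 1, fun h => absurd h hw⟩
  choose next bnext hnext using hstep
  let w : ℕ → ∀ ⦃j i : I⦄, j ≤ i → G j := fun n => Nat.rec z (fun n w => next n w) n
  have hw : ∀ n, IsCocycleAt G π K (α + n) (w n) := by
    intro n
    induction n with
    | zero => exact hz
    | succ n ih => exact (hnext n (w n) ih).1
  exact ⟨w, fun n => bnext n (w n), rfl, hw, fun n => (hnext n (w n) (hw n)).2.1,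
    fun n => (hnext n (w n) (hw n)).2.2⟩

end

theorem statement12
    (K : ∀ i, ℕ → Subgroup (G i))
    -- descending chain
    (hdesc : ∀ (i : I) (α : ℕ), K i (α + 1) ≤ K i α)
    -- ... and the maps `lim¹ G^{α+1} → lim¹ G^α` are surjective
    (ha2 : ∀ α : ℕ, 1 ≤ α → ∀ z : ∀ ⦃j i : I⦄, j ≤ i → G j,
      IsCocycleAt G π K α z →
      ∃ (z' : ∀ ⦃j i : I⦄, j ≤ i → G j) (b : ∀ i, G i),
        IsCocycleAt G π K (α + 1) z' ∧ (∀ i, b i ∈ K i α) ∧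
        ∀ ⦃j i : I⦄ (h : j ≤ i), z h = π h (b i) * z' h * (b j)⁻¹)
    -- (b) eventual triviality
    (hb : ∀ i : I, ∃ αᵢ : ℕ, ∀ α' : ℕ, αᵢ < α' → K i α' = ⊥) :
    ∀ α : ℕ, 1 ≤ α → ∀ z : ∀ ⦃j i : I⦄, j ≤ i → G j,
      IsCocycleAt G π K α z →
      ∃ b : ∀ i, G i, (∀ i, b i ∈ K i α) ∧
        ∀ ⦃j i : I⦄ (h : j ≤ i), z h = π h (b i) * (b j)⁻¹ := by
  intro α hα z hz
  obtain ⟨w, b, rfl, hw, hbK, hwb⟩ := exists_seq_cocycle_of_lift K ha2 hα hz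
  choose N hN using hb
  have hb_one : ∀ i k, N i ≤ k → b k i = 1 := fun i k hk =>
    Subgroup.mem_bot.mp (hN i (α + k) (by omega) ▸ hbK k i)
  have hw_one : ∀ n ⦃j i : I⦄ (h : j ≤ i), N j ≤ n → w n h = 1 := fun n j _ h hn =>
    Subgroup.mem_bot.mp (hN j (α + n) (by omega) ▸ (hw n).1 h)
  refine ⟨fun i => partialProd b (N i) i,
    fun i => partialProd_mem (S := fun α => (K i α).toSubmonoid)
      (antitone_nat_of_succ_le (hdesc i)) (hbK · i) _, ?_⟩
  intro j i h
  have hn := eq_partialProd_mul_mul_inv w b hwb (N i + N j) h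
  rwa [hw_one (N i + N j) h (by omega), mul_one, partialProd_eq_of_le (hb_one i) (by omega),
    partialProd_eq_of_le (hb_one j) (by omega)] at hn

end
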